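/- arXiv:2503.20575 — 2 statements merged into one kernel-verified Lean document; each statement's English description precedes it below -/
import Mathlib

section
/- Let K ≥ 2 and suppose c_{j,ℓ} ∈ (0,1) for 1 ≤ j ≤ K, 1 ≤ ℓ ≤ n satisfy ∑_{j=1}^K c_{j,ℓ}^s ≥ 1 for all ℓ, for some s ≥ 0. If Υ is any antichain in the K-ary tree of depth n that intersects every root-to-leaf path, then ∑_{σ ∈ Υ} c_σ^s ≥ 1, where c_σ = ∏_i c_{σ_i, i}. -/
open Real

/-- The label of a node `σ` of the `K`-ary tree: the product of the edge labels
`c_{σᵢ,i}` along the path from the root, where `i` is the (0-based) level. -/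
def nodeLabel {K : ℕ} (c : Fin K → ℕ → ℝ) (σ : List (Fin K)) : ℝ :=
  (σ.zipIdx.map (fun q => c q.1 q.2)).prod

lemma nodeLabel_cons {K : ℕ} (c : Fin K → ℕ → ℝ) (j : Fin K) (τ : List (Fin K)) :
    nodeLabel c (j :: τ) = c j 0 * nodeLabel (fun k ℓ => c k (ℓ+1)) τ := by
  simp [nodeLabel, List.zipIdx_succ, List.map_map, Function.comp_def]

lemma nodeLabel_pos {K : ℕ} (c : Fin K → ℕ → ℝ) (σ : List (Fin K))
    (h : ∀ j, ∀ ℓ < σ.length, 0 < c j ℓ) : 0 < nodeLabel c σ := by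
  apply List.prod_pos
  intro x hx
  simp only [List.mem_map] at hx
  obtain ⟨q, hq, rfl⟩ := hx
  have h1 : q.2 < σ.length := by
    have := List.snd_lt_add_of_mem_zipIdx (k := 0) hq
    simpa using this
  exact h _ _ h1

lemma submass_aux (K : ℕ) (hK : 1 ≤ K) (s : ℝ) (hs : 0 ≤ s) :
    ∀ (n : ℕ) (c : Fin K → ℕ → ℝ),
    (∀ j, ∀ ℓ < n, 0 < c j ℓ) →
    (∀ ℓ < n, 1 ≤ ∑ j, (c j ℓ) ^ s) →
    ∀ (Υ : Finset (List (Fin K))),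
    (∀ σ ∈ Υ, σ.length ≤ n) →
    (∀ σ ∈ Υ, ∀ ρ ∈ Υ, σ <+: ρ → σ = ρ) →
    (∀ σ : List (Fin K), σ.length = n → ∃ ρ ∈ Υ, ρ <+: σ) →
    1 ≤ ∑ σ ∈ Υ, (nodeLabel c σ) ^ s := by
  haveI : Inhabited (Fin K) := ⟨⟨0, hK⟩⟩
  intro n
  induction n with
  | zero =>
    intro c hc hcs Υ hlen hanti hcut
    obtain ⟨ρ, hρ, hpre⟩ := hcut [] rfl
    have hρnil : ρ = [] := List.prefix_nil.mp hpre
    subst hρnil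
    have : Υ = {[]} := by
      apply Finset.eq_singleton_iff_unique_mem.mpr
      exact ⟨hρ, fun σ hσ => (hanti [] hρ σ hσ (List.nil_prefix)).symm⟩
    simp [this, nodeLabel]
  | succ n ih =>
    intro c hc hcs Υ hlen hanti hcut
    by_cases hnil : [] ∈ Υ
    · have : Υ = {[]} := by
        apply Finset.eq_singleton_iff_unique_mem.mpr
        exact ⟨hnil, fun σ hσ => (hanti [] hnil σ hσ (List.nil_prefix)).symm⟩
      simp [this, nodeLabel]
    · -- every element of Υ is nonempty
      have hne : ∀ σ ∈ Υ, σ ≠ [] := fun σ hσ h => hnil (h ▸ hσ)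
      set c' : Fin K → ℕ → ℝ := fun k ℓ => c k (ℓ+1) with hc'def
      -- split by head
      rw [← Finset.sum_fiberwise Υ (fun σ => σ.headI) (fun σ => (nodeLabel c σ) ^ s)]
      have key : ∀ j : Fin K,
          (c j 0) ^ s ≤ ∑ σ ∈ Υ.filter (fun σ => σ.headI = j), (nodeLabel c σ) ^ s := by
        intro j
        set Υj : Finset (List (Fin K)) := (Υ.filter (fun σ => σ.headI = j)).image List.tail
          with hΥj
        have hmem : ∀ σ ∈ Υ.filter (fun σ => σ.headI = j), σ = j :: σ.tail := by
          intro σ hσ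
          rw [Finset.mem_filter] at hσ
          obtain ⟨hσΥ, hσh⟩ := hσ
          cases σ with
          | nil => exact absurd rfl (hne [] hσΥ)
          | cons a t => simp at hσh ⊢; exact hσh
        have hmem' : ∀ τ ∈ Υj, (j :: τ) ∈ Υ ∧ (j :: τ).headI = j := by
          intro τ hτ
          rw [hΥj, Finset.mem_image] at hτ
          obtain ⟨σ, hσ, rfl⟩ := hτ
          have := hmem σ hσ
          rw [Finset.mem_filter] at hσ
          exact ⟨this ▸ hσ.1, rfl⟩
        have hsum : ∑ σ ∈ Υ.filter (fun σ => σ.headI = j), (nodeLabel c σ) ^ s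
            = (c j 0) ^ s * ∑ τ ∈ Υj, (nodeLabel c' τ) ^ s := by
          rw [Finset.mul_sum, hΥj, Finset.sum_image ?_]
          · apply Finset.sum_congr rfl
            intro σ hσ
            conv_lhs => rw [hmem σ hσ]
            rw [nodeLabel_cons]
            rw [Real.mul_rpow (le_of_lt (hc j 0 (Nat.succ_pos n)))]
            apply le_of_lt
            apply nodeLabel_pos
            intro k ℓ hℓ
            apply hc
            have : σ.tail.length ≤ n := by
              have := hlen σ (Finset.mem_filter.mp hσ).1
              rw [hmem σ hσ] at this
              simpa using this
            omega
          · intro σ₁ h₁ σ₂ h₂ ht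
            rw [hmem σ₁ h₁, hmem σ₂ h₂, ht]
        rw [hsum]
        have h1 : (1:ℝ) ≤ ∑ τ ∈ Υj, (nodeLabel c' τ) ^ s := by
          apply ih c'
          · intro k ℓ hℓ; exact hc k (ℓ+1) (by omega)
          · intro ℓ hℓ; exact hcs (ℓ+1) (by omega)
          · intro τ hτ
            have := hlen _ (hmem' τ hτ).1
            simpa using this
          · intro τ₁ h₁ τ₂ h₂ hpre
            have := hanti _ (hmem' τ₁ h₁).1 _ (hmem' τ₂ h₂).1 (List.cons_prefix_cons.mpr ⟨rfl, hpre⟩)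
            injection this
          · intro τ hτn
            obtain ⟨ρ, hρΥ, hρpre⟩ := hcut (j :: τ) (by simpa using hτn)
            cases ρ with
            | nil => exact absurd hρΥ hnil
            | cons a t =>
              obtain ⟨ha, hpre⟩ := List.cons_prefix_cons.mp hρpre
              refine ⟨t, ?_, hpre⟩
              rw [hΥj, Finset.mem_image]
              exact ⟨a :: t, Finset.mem_filter.mpr ⟨hρΥ, by simp [ha]⟩, rfl⟩
        nlinarith [Real.rpow_nonneg (le_of_lt (hc j 0 (Nat.succ_pos n))) s]
      calc (1:ℝ) ≤ ∑ j, (c j 0) ^ s := hcs 0 (Nat.succ_pos n)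
        _ ≤ _ := Finset.sum_le_sum (fun j _ => key j)

/-- Sub-mass inequality: if `∑ⱼ c_{j,ℓ}^s ≥ 1` at every level and `Υ` is an
antichain in the `K`-ary tree of depth `n` meeting every root-to-leaf path,
then `∑_{σ ∈ Υ} c_σ^s ≥ 1`. -/
theorem antichain_submass (K n : ℕ) (hK : 2 ≤ K) (c : Fin K → ℕ → ℝ)
    (hc : ∀ j, ∀ ℓ < n, c j ℓ ∈ Set.Ioo (0:ℝ) 1)
    (s : ℝ) (hs : 0 ≤ s) (hcs : ∀ ℓ < n, 1 ≤ ∑ j, (c j ℓ) ^ s)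
    (Υ : Finset (List (Fin K)))
    (hlen : ∀ σ ∈ Υ, σ.length ≤ n)
    (hanti : ∀ σ ∈ Υ, ∀ ρ ∈ Υ, σ <+: ρ → σ = ρ)
    (hcut : ∀ σ : List (Fin K), σ.length = n → ∃ ρ ∈ Υ, ρ <+: σ) :
    1 ≤ ∑ σ ∈ Υ, (nodeLabel c σ) ^ s :=
  submass_aux K (by omega) s hs n c (fun j ℓ hℓ => (hc j ℓ hℓ).1) hcs Υ hlen hanti hcut
end

section
/- Let K ≥ 2, let ā₁,…,ā_K ∈ (0,1), and let Δ ≥ 0 satisfy ∑_j ā_j^Δ = 1. Suppose p̲₁,…,p̲_K ∈ (0,1] satisfy ∑_j p̲_j ≤ 1 and there is an index, say j = 1, such that log p̲_j / log ā_j ≤ log p̲₁ / log ā₁ for all j. Then p̲₁ ≤ ā₁^Δ, and hence log p̲₁ / log ā₁ ≥ Δ. -/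
open Real

/-- Independent probabilities lower bound: if `∑ āⱼ^Δ = 1`, the `p̲ⱼ ∈ (0,1]`
satisfy `∑ p̲ⱼ ≤ 1`, and the exponent `log p̲ⱼ / log āⱼ` is maximized at `i₀`,
then `p̲_{i₀} ≤ ā_{i₀}^Δ`, hence `log p̲_{i₀} / log ā_{i₀} ≥ Δ`. -/
theorem independent_upper_bound_Delta (K : ℕ) (hK : 2 ≤ K)
    (abar : Fin K → ℝ) (hab : ∀ j, abar j ∈ Set.Ioo (0:ℝ) 1)
    (Δ : ℝ) (hΔ : 0 ≤ Δ) (hsum : ∑ j, abar j ^ Δ = 1)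
    (p : Fin K → ℝ) (hp : ∀ j, p j ∈ Set.Ioc (0:ℝ) 1) (hpsum : ∑ j, p j ≤ 1)
    (i₀ : Fin K)
    (hmax : ∀ j, Real.log (p j) / Real.log (abar j) ≤
      Real.log (p i₀) / Real.log (abar i₀)) :
    p i₀ ≤ abar i₀ ^ Δ ∧ Δ ≤ Real.log (p i₀) / Real.log (abar i₀) := by
  set a := abar i₀ with ha_def
  have ha := hab i₀
  have hL : Real.log a < 0 := Real.log_neg ha.1 ha.2
  have hLne : Real.log a ≠ 0 := ne_of_lt hL
  set s : Fin K → ℝ := fun j => Real.log (abar j) / Real.log a with hs_def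
  have hLj : ∀ j, Real.log (abar j) < 0 := fun j => Real.log_neg (hab j).1 (hab j).2
  have hs_pos : ∀ j, 0 < s j := fun j => div_pos_of_neg_of_neg (hLj j) hL
  -- a ^ s j = abar j
  have hpow : ∀ j, a ^ s j = abar j := by
    intro j
    rw [Real.rpow_def_of_pos ha.1]
    have : Real.log a * s j = Real.log (abar j) := by
      simp only [hs_def]; field_simp
    rw [this, Real.exp_log (hab j).1]
  -- (a^Δ)^(s j) = abar j ^ Δ
  have hkey : ∀ j, (a ^ Δ) ^ s j = abar j ^ Δ := by
    intro j
    rw [← Real.rpow_mul ha.1.le, mul_comm, Real.rpow_mul ha.1.le, hpow]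
  -- p i₀ ^ s j ≤ p j
  have hplow : ∀ j, p i₀ ^ s j ≤ p j := by
    intro j
    have h1 := (div_le_iff_of_neg (hLj j)).mp (hmax j)
    have h2 : Real.log (p i₀) * s j ≤ Real.log (p j) := by
      calc Real.log (p i₀) * s j
          = Real.log (p i₀) / Real.log a * Real.log (abar j) := by
            simp only [hs_def]; ring
        _ ≤ Real.log (p j) := h1
    calc p i₀ ^ s j = Real.exp (Real.log (p i₀) * s j) :=
          Real.rpow_def_of_pos (hp i₀).1 _
      _ ≤ Real.exp (Real.log (p j)) := Real.exp_le_exp.mpr h2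
      _ = p j := Real.exp_log (hp j).1
  have hne : (Finset.univ : Finset (Fin K)).Nonempty := by
    have : 0 < K := by omega
    exact ⟨⟨0, this⟩, Finset.mem_univ _⟩
  have haΔpos : 0 < a ^ Δ := Real.rpow_pos_of_pos ha.1 Δ
  have hfirst : p i₀ ≤ a ^ Δ := by
    by_contra h
    push_neg at h
    have hlt : ∀ j ∈ Finset.univ, (a ^ Δ) ^ s j < p i₀ ^ s j := fun j _ =>
      Real.rpow_lt_rpow haΔpos.le h (hs_pos j)
    have : (1:ℝ) < 1 := by
      calc (1:ℝ) = ∑ j, abar j ^ Δ := hsum.symm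
        _ = ∑ j, (a ^ Δ) ^ s j := by simp_rw [hkey]
        _ < ∑ j, p i₀ ^ s j := Finset.sum_lt_sum_of_nonempty hne hlt
        _ ≤ ∑ j, p j := Finset.sum_le_sum (fun j _ => hplow j)
        _ ≤ 1 := hpsum
    exact absurd this (lt_irrefl 1)
  refine ⟨hfirst, ?_⟩
  have hlog : Real.log (p i₀) ≤ Δ * Real.log a := by
    calc Real.log (p i₀) ≤ Real.log (a ^ Δ) :=
          Real.log_le_log (hp i₀).1 hfirst
      _ = Δ * Real.log a := Real.log_rpow ha.1 Δ
  exact (le_div_iff_of_neg hL).mpr hlog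
end
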